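/- arXiv:1211.6845 — 10 statements merged into one kernel-verified Lean document; each statement's English description precedes it below -/
import Mathlib

section
/- Any real 3×3 matrix with positive determinant equals the adjugate Adj(K) of some 3×3 matrix K, and K is unique up to sign (i.e., exactly ±K work). -/
open Matrix

/-- Any real 3×3 matrix with positive determinant equals the adjugate of some
matrix `K`, and exactly `±K` work. -/
theorem adjugate_surjective_pos_det (A : Matrix (Fin 3) (Fin 3) ℝ) (hA : 0 < A.det) :
    ∃ K : Matrix (Fin 3) (Fin 3) ℝ,
      ∀ K' : Matrix (Fin 3) (Fin 3) ℝ, K'.adjugate = A ↔ (K' = K ∨ K' = -K) := by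
  set d : ℝ := Real.sqrt A.det with hd
  have hdpos : 0 < d := Real.sqrt_pos.mpr hA
  have hd2 : d ^ 2 = A.det := Real.sq_sqrt hA.le
  have hcard : Fintype.card (Fin 3) ≠ 1 := by simp
  have hAA : adjugate (adjugate A) = A.det • A := by
    rw [adjugate_adjugate A hcard]; norm_num
  refine ⟨d⁻¹ • A.adjugate, fun K' => ⟨fun h => ?_, fun h => ?_⟩⟩
  · have hdet : K'.det ^ 2 = A.det := by
      have := det_adjugate K'
      rw [h] at this
      simpa using this.symm
    have hadjA : adjugate A = K'.det • K' := by
      rw [← h, adjugate_adjugate K' hcard]; norm_num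
    have hcases : K'.det = d ∨ K'.det = -d := by
      have : (K'.det - d) * (K'.det + d) = 0 := by nlinarith
      rcases mul_eq_zero.mp this with h1 | h1
      · left; linarith
      · right; linarith
    rcases hcases with h1 | h1
    · left
      rw [hadjA, h1, smul_smul, inv_mul_cancel₀ hdpos.ne', one_smul]
    · right
      rw [hadjA, h1, smul_smul]
      rw [show d⁻¹ * -d = -1 by field_simp]
      simp
  · have key : ∀ c : ℝ, c = d⁻¹ ∨ c = -d⁻¹ → adjugate (c • A.adjugate) = A := by
      intro c hc
      have hc2 : c ^ 2 = d⁻¹ ^ 2 := by rcases hc with h | h <;> rw [h] <;> ring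
      rw [adjugate_smul, hAA]
      have : Fintype.card (Fin 3) - 1 = 2 := by norm_num
      rw [this, hc2, smul_smul]
      have : d⁻¹ ^ 2 * A.det = 1 := by
        rw [← hd2]; field_simp
      rw [this, one_smul]
    rcases h with h | h
    · rw [h]; exact key _ (Or.inl rfl)
    · rw [h, show -(d⁻¹ • A.adjugate) = (-d⁻¹) • A.adjugate by simp]
      exact key _ (Or.inr rfl)
end

section
/- The linear map Φ from real 3×3 matrices to real symmetric 4×4 matrices defined by sending K = (k_ij) to the matrix with diagonal entries (−k₁₁−k₂₂−k₃₃, −k₁₁+k₂₂+k₃₃, k₁₁−k₂₂+k₃₃, k₁₁+k₂₂−k₃₃) and off-diagonal entries Φ₁₂ = k₂₃−k₃₂, Φ₁₃ = −k₁₃+k₃₁, Φ₁₄ = k₁₂−k₂₁, Φ₂₃ = −k₁₂−k₂₁, Φ₂₄ = −k₁₃−k₃₁, Φ₃₄ = −k₂₃−k₃₂ (extended symmetrically) is a linear isomorphism onto the space of trace-free symmetric 4×4 real matrices. -/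
open Matrix

/-- The equivariant map Φ : ℝ^{3×3} → S²₀(ℝ⁴) of Lemma 3.1 (Madsen–Salamon). -/
def Phi (K : Matrix (Fin 3) (Fin 3) ℝ) : Matrix (Fin 4) (Fin 4) ℝ :=
  Matrix.of
    ![![-K 0 0 - K 1 1 - K 2 2, K 1 2 - K 2 1, -K 0 2 + K 2 0, K 0 1 - K 1 0],
      ![K 1 2 - K 2 1, -K 0 0 + K 1 1 + K 2 2, -K 0 1 - K 1 0, -K 0 2 - K 2 0],
      ![-K 0 2 + K 2 0, -K 0 1 - K 1 0, K 0 0 - K 1 1 + K 2 2, -K 1 2 - K 2 1],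
      ![K 0 1 - K 1 0, -K 0 2 - K 2 0, -K 1 2 - K 2 1, K 0 0 + K 1 1 - K 2 2]]

/-- Inverse of Φ on trace-free symmetric matrices. -/
noncomputable def PhiInv (S : Matrix (Fin 4) (Fin 4) ℝ) : Matrix (Fin 3) (Fin 3) ℝ :=
  Matrix.of
    ![![-(S 0 0 + S 1 1) / 2, (S 0 3 - S 1 2) / 2, (-S 0 2 - S 1 3) / 2],
      ![(-S 0 3 - S 1 2) / 2, -(S 0 0 + S 2 2) / 2, (S 0 1 - S 2 3) / 2],
      ![(S 0 2 - S 1 3) / 2, (-S 0 1 - S 2 3) / 2, -(S 0 0 + S 3 3) / 2]]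

set_option maxHeartbeats 2000000 in
/-- Φ is a linear isomorphism from ℝ^{3×3} onto the trace-free symmetric 4×4 matrices. -/
theorem Phi_linear_equiv :
    (∀ K L : Matrix (Fin 3) (Fin 3) ℝ, Phi (K + L) = Phi K + Phi L) ∧
    (∀ (c : ℝ) (K : Matrix (Fin 3) (Fin 3) ℝ), Phi (c • K) = c • Phi K) ∧
    Function.Injective Phi ∧
    Set.range Phi = {S : Matrix (Fin 4) (Fin 4) ℝ | S.IsSymm ∧ S.trace = 0} := by
  have hleft : ∀ K, PhiInv (Phi K) = K := by
    intro K
    ext i j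
    fin_cases i <;> fin_cases j <;>
      simp [PhiInv, Phi] <;> ring
  refine ⟨?_, ?_, ?_, ?_⟩
  · intro K L
    ext i j
    fin_cases i <;> fin_cases j <;>
      simp [Phi, Matrix.add_apply] <;> ring
  · intro c K
    ext i j
    fin_cases i <;> fin_cases j <;>
      simp [Phi, Matrix.smul_apply] <;> ring
  · intro K L h
    have := congrArg PhiInv h
    rwa [hleft, hleft] at this
  · ext S
    constructor
    · rintro ⟨K, rfl⟩
      constructor
      · ext i j
        fin_cases i <;> fin_cases j <;>
          simp [Phi, Matrix.transpose_apply]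
      · simp [Matrix.trace, Phi, Fin.sum_univ_four]
        ring
    · rintro ⟨hsymm, htr⟩
      refine ⟨PhiInv S, ?_⟩
      have hs : ∀ i j, S j i = S i j := by
        intro i j
        have := congrFun (congrFun hsymm i) j
        simpa [Matrix.transpose_apply] using this
      have ht : S 0 0 + S 1 1 + S 2 2 + S 3 3 = 0 := by
        simpa [Matrix.trace, Fin.sum_univ_four, Matrix.diag] using htr
      ext i j
      fin_cases i <;> fin_cases j <;>
        simp [Phi, PhiInv] <;>
        first
          | linarith [ht]
          | (rw [show (3 : Fin 4) = 3 from rfl]; linarith [hs 0 1, hs 0 2, hs 0 3, hs 1 2, hs 1 3, hs 2 3, ht])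
end

section
/- For every real 3×3 matrix K, the image S = Φ(K) under the isomorphism Φ of the previous context satisfies tr(S²) = 4·tr(K·Kᵀ). -/
open Matrix

theorem trace_sq_Phi (K : Matrix (Fin 3) (Fin 3) ℝ) :
    ((Phi K) ^ 2).trace = 4 * (K * Kᵀ).trace := by
  simp [Phi, pow_two, Matrix.trace, Fin.sum_univ_succ, Matrix.diag, Matrix.mul_apply, transpose_apply]
  ring
end

section
/- For every real 3×3 matrix K, the image S = Φ(K) satisfies tr(S³) = −24·det(K). -/
open Matrix

theorem trace_cube_Phi (K : Matrix (Fin 3) (Fin 3) ℝ) :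
    ((Phi K) ^ 3).trace = -24 * K.det := by
  simp only [pow_three, trace, diag, mul_apply, Fin.sum_univ_four, det_fin_three, Phi, of_apply,
    cons_val, Fin.isValue]
  ring
end

section
/- For every real 3×3 matrix K, the trace-free part of S², where S = Φ(K), equals Φ(−2·Adj(Kᵀ)); that is, (S²)₀ ≔ S² − (tr(S²)/4)·I = Φ(−2·Adj(Kᵀ)). -/
open Matrix

set_option maxHeartbeats 2000000 in
theorem tracefree_sq_Phi (K : Matrix (Fin 3) (Fin 3) ℝ) :
    (Phi K) ^ 2 - ((((Phi K) ^ 2).trace) / 4) • (1 : Matrix (Fin 4) (Fin 4) ℝ) =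
      Phi ((-2 : ℝ) • (Kᵀ).adjugate) := by
  ext i j
  rw [pow_two]
  fin_cases i <;> fin_cases j <;>
    simp [Phi, Matrix.mul_apply, Matrix.trace, Matrix.diag, Fin.sum_univ_succ,
      Matrix.adjugate_fin_three, Matrix.one_apply, Matrix.smul_apply] <;> ring
end

section
/- For every real 3×3 matrix K, the image S = Φ(K) satisfies 3·det(S) + (1/4)·tr(S⁴) = 4·tr((K·Kᵀ)²). -/
open Matrix

/-!
Squaring Φ produces the cofactor matrix: `Φ(K)² = |K|² · 1 - 2 Φ(cof K)` with `|K|² = tr K Kᵀ`.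
Since Φ is trace-free, taking traces gives `tr Φ(K)² = 4 |K|²` and
`tr Φ(K)⁴ = 4 |K|⁴ + 16 |cof K|²`, where `|cof K|² = tr adj(K Kᵀ) = (|K|⁴ - tr (K Kᵀ)²) / 2`.
Newton's identity for a trace-free `4 × 4` matrix, `8 det S = (tr S²)² - 2 tr S⁴`, then expresses
`det Φ(K)` through the same two invariants `tr K Kᵀ` and `tr (K Kᵀ)²`.
-/

namespace Matrix

variable {R : Type*} [CommRing R]

/-- Newton's identity expressing `e₄` of the eigenvalues through the power sums `tr Aᵏ`. -/
theorem det_fin_four_eq_trace_pow (A : Matrix (Fin 4) (Fin 4) R) :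
    24 * A.det = A.trace ^ 4 - 6 * A.trace ^ 2 * (A ^ 2).trace + 3 * (A ^ 2).trace ^ 2
      + 8 * A.trace * (A ^ 3).trace - 6 * (A ^ 4).trace := by
  rw [show A ^ 4 = A * A * (A * A) by noncomm_ring, pow_three, pow_two A, det_succ_row_zero]
  simp only [Fin.sum_univ_four, det_fin_three, submatrix_apply, trace, diag_apply, mul_apply,
    Fin.succAbove, Fin.reduceSucc, Fin.reduceCastSucc, Fin.reduceLT, Fin.succ_zero_eq_one,
    Fin.castSucc_zero, Fin.succ_one_eq_two, Fin.castSucc_one, ↓reduceIte, Fin.isValue,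
    Fin.coe_ofNat_eq_mod]
  ring

theorem trace_adjugate_fin_three (A : Matrix (Fin 3) (Fin 3) R) :
    2 * A.adjugate.trace = A.trace ^ 2 - (A ^ 2).trace := by
  simp only [adjugate_fin_three, trace_fin_three, pow_two, mul_apply, Fin.sum_univ_three,
    of_apply, cons_val', cons_val_zero, cons_val_one, cons_val, cons_val_fin_one, Fin.isValue]
  ring

end Matrix

theorem trace_Phi (K : Matrix (Fin 3) (Fin 3) ℝ) : (Phi K).trace = 0 := by
  simp only [trace, Fin.sum_univ_four, diag_apply, Phi, of_apply, cons_val', cons_val_zero,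
    cons_val_one, cons_val, cons_val_fin_one, Fin.isValue]
  ring

theorem Phi_sq (K : Matrix (Fin 3) (Fin 3) ℝ) :
    Phi K ^ 2 = (K * Kᵀ).trace • 1 - (2 : ℝ) • Phi (adjugate K)ᵀ := by
  ext i j
  fin_cases i <;> fin_cases j <;>
    simp [Phi, pow_two, mul_apply, Fin.sum_univ_four, Fin.sum_univ_three, trace_fin_three,
      adjugate_fin_three] <;> ring

theorem trace_Phi_sq (K : Matrix (Fin 3) (Fin 3) ℝ) :
    (Phi K ^ 2).trace = 4 * (K * Kᵀ).trace := by
  simp only [Phi_sq, trace_sub, trace_smul, trace_one, trace_Phi, Fintype.card_fin, smul_eq_mul,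
    Nat.cast_ofNat]
  ring

theorem trace_Phi_pow_four (K : Matrix (Fin 3) (Fin 3) ℝ) :
    (Phi K ^ 4).trace = 12 * (K * Kᵀ).trace ^ 2 - 8 * ((K * Kᵀ) ^ 2).trace := by
  have hcof : (adjugate K)ᵀ * (adjugate K)ᵀᵀ = adjugate (K * Kᵀ) := by
    rw [transpose_transpose, adjugate_transpose, adjugate_mul_distrib]
  calc (Phi K ^ 4).trace = ((Phi K ^ 2) ^ 2).trace := by rw [← pow_mul]
    _ = (((K * Kᵀ).trace • 1 - (2 : ℝ) • Phi (adjugate K)ᵀ) ^ 2).trace := by rw [Phi_sq]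
    _ = 4 * (K * Kᵀ).trace ^ 2 + 4 * (Phi (adjugate K)ᵀ ^ 2).trace := by
        simp only [sq, mul_sub, sub_mul, mul_one, one_mul, Algebra.mul_smul_comm,
          Algebra.smul_mul_assoc, trace_sub, trace_smul, trace_one, Fintype.card_fin,
          Nat.cast_ofNat, smul_eq_mul, trace_Phi]
        ring
    _ = 4 * (K * Kᵀ).trace ^ 2 + 8 * (2 * (adjugate (K * Kᵀ)).trace) := by
        rw [trace_Phi_sq, hcof]
        ring
    _ = 12 * (K * Kᵀ).trace ^ 2 - 8 * ((K * Kᵀ) ^ 2).trace := by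
        rw [trace_adjugate_fin_three]
        ring

theorem det_trace_quartic_Phi (K : Matrix (Fin 3) (Fin 3) ℝ) :
    3 * (Phi K).det + (1 / 4) * ((Phi K) ^ 4).trace = 4 * ((K * Kᵀ) ^ 2).trace := by
  have hdet := det_fin_four_eq_trace_pow (Phi K)
  rw [trace_Phi, trace_Phi_sq, trace_Phi_pow_four] at hdet
  rw [trace_Phi_pow_four]
  linear_combination hdet / 8
end

section
/- For every real 3×3 matrix K, the image S = Φ(K) satisfies det(S) + (1/4)·tr(S⁴) = 2·tr(K·Kᵀ)². -/
open Matrix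
set_option maxHeartbeats 4000000

theorem my_det_fin_four {R : Type*} [CommRing R] (A : Matrix (Fin 4) (Fin 4) R) :
    det A =
      A 0 0 * (A 1 1 * A 2 2 * A 3 3 - A 1 1 * A 2 3 * A 3 2
        - A 1 2 * A 2 1 * A 3 3 + A 1 2 * A 2 3 * A 3 1
        + A 1 3 * A 2 1 * A 3 2 - A 1 3 * A 2 2 * A 3 1)
      - A 0 1 * (A 1 0 * A 2 2 * A 3 3 - A 1 0 * A 2 3 * A 3 2
        - A 1 2 * A 2 0 * A 3 3 + A 1 2 * A 2 3 * A 3 0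
        + A 1 3 * A 2 0 * A 3 2 - A 1 3 * A 2 2 * A 3 0)
      + A 0 2 * (A 1 0 * A 2 1 * A 3 3 - A 1 0 * A 2 3 * A 3 1
        - A 1 1 * A 2 0 * A 3 3 + A 1 1 * A 2 3 * A 3 0
        + A 1 3 * A 2 0 * A 3 1 - A 1 3 * A 2 1 * A 3 0)
      - A 0 3 * (A 1 0 * A 2 1 * A 3 2 - A 1 0 * A 2 2 * A 3 1
        - A 1 1 * A 2 0 * A 3 2 + A 1 1 * A 2 2 * A 3 0
        + A 1 2 * A 2 0 * A 3 1 - A 1 2 * A 2 1 * A 3 0) := by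
  rw [det_succ_row_zero, Fin.sum_univ_four]
  norm_num [det_fin_three, Fin.succAbove, Fin.lt_def, Fin.ext_iff]
  simp only [show (Fin.succ 2 : Fin 4) = 3 from rfl, show ((3:Fin 4):ℕ) = 3 from rfl,
    show (Fin.castSucc 2 : Fin 4) = 2 from rfl]
  norm_num
  ring

theorem det_trace_quartic_Phi' (K : Matrix (Fin 3) (Fin 3) ℝ) :
    (Phi K).det + (1 / 4) * ((Phi K) ^ 4).trace = 2 * ((K * Kᵀ).trace) ^ 2 := by
  rw [my_det_fin_four]
  simp only [Phi, trace, pow_succ, pow_zero, one_mul, Matrix.mul_apply, diag,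
    Fin.sum_univ_four, of_apply, cons_val', cons_val_zero, cons_val_one, head_cons,
    cons_val_two, tail_cons, cons_val_three, head_fin_const, empty_val', cons_val_fin_one,
    transpose_apply, Fin.sum_univ_three]
  ring
end

section
/- For every real 3×3 matrix K, with S = Φ(K), one has Φ(2·K·Kᵀ·K) = (3/4)·tr(S²)·S − (S³)₀, where (S³)₀ = S³ − (tr(S³)/4)·I. -/
open Matrix

set_option maxHeartbeats 4000000 in
theorem Phi_KKtK (K : Matrix (Fin 3) (Fin 3) ℝ) :
    Phi ((2 : ℝ) • (K * Kᵀ * K)) =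
      ((3 / 4) * ((Phi K) ^ 2).trace) • Phi K -
        ((Phi K) ^ 3 - (((Phi K) ^ 3).trace / 4) • (1 : Matrix (Fin 4) (Fin 4) ℝ)) := by
  have h2 : (Phi K) ^ 2 = Phi K * Phi K := pow_two _
  have h3 : (Phi K) ^ 3 = Phi K * Phi K * Phi K := by rw [pow_succ, pow_two]
  have t2 : (Phi K * Phi K).trace =
      4 * (K 0 0 ^ 2 + K 0 1 ^ 2 + K 0 2 ^ 2 + K 1 0 ^ 2 + K 1 1 ^ 2 + K 1 2 ^ 2 +
        K 2 0 ^ 2 + K 2 1 ^ 2 + K 2 2 ^ 2) := by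
    simp [Matrix.trace, Matrix.diag, Fin.sum_univ_four, Matrix.mul_apply, Phi]
    ring
  have t3 : (Phi K * Phi K * Phi K).trace =
      -24 * (K 0 0 * (K 1 1 * K 2 2 - K 1 2 * K 2 1) - K 0 1 * (K 1 0 * K 2 2 - K 1 2 * K 2 0) +
        K 0 2 * (K 1 0 * K 2 1 - K 1 1 * K 2 0)) := by
    simp [Matrix.trace, Matrix.diag, Fin.sum_univ_four, Matrix.mul_apply, Phi]
    ring
  rw [h2, h3, t2, t3]
  ext i j
  fin_cases i <;> fin_cases j <;>
    simp [Phi, Matrix.mul_apply, Fin.sum_univ_four, Fin.sum_univ_three,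
      Matrix.one_apply, Matrix.transpose_apply] <;> ring
end

section
/- Let Q̂ be a real symmetric 4×4 matrix of the form Q + a·I with Q trace-free symmetric. If the trace-free part of the adjugate of Q̂ vanishes, i.e., (Adj(Q̂))₀ = 0, then det(Q̂) ≥ 0. -/
open Matrix

/-- If `Q̂ = Q + a·I` with `Q` trace-free symmetric and the trace-free part of
`Adj(Q̂)` vanishes, then `det(Q̂) ≥ 0`. -/
theorem det_nonneg_of_adjugate_tracefree_part_eq_zero
    (Q : Matrix (Fin 4) (Fin 4) ℝ) (a : ℝ)
    (hsymm : Q.IsSymm) (htr : Q.trace = 0)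
    (h : (Q + a • (1 : Matrix (Fin 4) (Fin 4) ℝ)).adjugate -
        (((Q + a • (1 : Matrix (Fin 4) (Fin 4) ℝ)).adjugate.trace) / 4) •
          (1 : Matrix (Fin 4) (Fin 4) ℝ) = 0) :
    0 ≤ (Q + a • (1 : Matrix (Fin 4) (Fin 4) ℝ)).det := by
  set M := Q + a • (1 : Matrix (Fin 4) (Fin 4) ℝ) with hM
  set c := M.adjugate.trace / 4 with hc
  have hadj : M.adjugate = c • (1 : Matrix (Fin 4) (Fin 4) ℝ) := sub_eq_zero.mp h
  have key : M * M.adjugate = M.det • (1 : Matrix (Fin 4) (Fin 4) ℝ) := mul_adjugate M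
  rw [hadj] at key
  have key2 : c • M = M.det • (1 : Matrix (Fin 4) (Fin 4) ℝ) := by
    rw [← key, Matrix.mul_smul, Matrix.mul_one]
  by_cases h0 : c = 0
  · have hz : M.det • (1 : Matrix (Fin 4) (Fin 4) ℝ) = 0 := by
      rw [← key2, h0, zero_smul]
    have : M.det = 0 := by
      have := congrFun (congrFun hz 0) 0
      simpa using this
    simp [this]
  · have hMeq : M = (c⁻¹ * M.det) • (1 : Matrix (Fin 4) (Fin 4) ℝ) := by
      have := congrArg (fun X => c⁻¹ • X) key2
      simpa only [smul_smul, inv_mul_cancel₀ h0, one_smul] using this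
    have hdet : M.det = (c⁻¹ * M.det) ^ 4 := by
      conv_lhs => rw [hMeq]
      simp [Matrix.det_smul]
    rw [hdet]
    positivity
end

section
/- Let a > 0. The equation x² + 2ax − a² = 0 has the solution x = (4s³+a)/3 with s = −a^{1/3}·(1 + (3/4)√2)^{1/3}, and this s satisfies s < min{0, −a^{1/3}}. -/
/-- For `a > 0`, with `s = −a^{1/3}·(1 + (3/4)√2)^{1/3}` and `x = (4s³+a)/3`, one has
`x² + 2ax − a² = 0` and `s < min{0, −a^{1/3}}`. -/
theorem alpha_critical_point (a : ℝ) (ha : 0 < a) :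
    let s : ℝ := -(a ^ ((1 : ℝ) / 3)) * (1 + (3 / 4) * Real.sqrt 2) ^ ((1 : ℝ) / 3)
    let x : ℝ := (4 * s ^ 3 + a) / 3
    x ^ 2 + 2 * a * x - a ^ 2 = 0 ∧ s < min 0 (-(a ^ ((1 : ℝ) / 3))) := by
  intro s x
  set t := a ^ ((1:ℝ)/3) with ht
  have ht3 : t ^ 3 = a := by
    rw [ht, ← Real.rpow_natCast (a ^ ((1:ℝ)/3)) 3, ← Real.rpow_mul ha.le]
    norm_num
  have hb : (0:ℝ) < 1 + (3/4) * Real.sqrt 2 := by positivity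
  set c := (1 + (3/4) * Real.sqrt 2) ^ ((1:ℝ)/3) with hc
  have hc3 : c ^ 3 = 1 + (3/4) * Real.sqrt 2 := by
    rw [hc, ← Real.rpow_natCast _ 3, ← Real.rpow_mul hb.le]; norm_num
  have ht0 : 0 < t := Real.rpow_pos_of_pos ha _
  have hs3 : s ^ 3 = -a * (1 + (3/4) * Real.sqrt 2) := by
    show (-t * c) ^ 3 = _
    rw [mul_pow, show (-t)^3 = -(t^3) by ring, ht3, hc3]
  have hx : x = -a * (1 + Real.sqrt 2) := by
    show (4 * s ^ 3 + a)/3 = _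
    rw [hs3]; ring
  constructor
  · rw [hx]
    have h2 : Real.sqrt 2 ^ 2 = 2 := Real.sq_sqrt (by norm_num)
    nlinarith [h2]
  · have hc1 : 1 < c := by
      rw [hc]
      refine (Real.one_lt_rpow_iff_of_pos hb).2 (Or.inl ⟨?_, by norm_num⟩)
      nlinarith [Real.sqrt_pos.2 (show (0:ℝ) < 2 by norm_num)]
    have hst : s < -t := by
      show -t * c < -t
      nlinarith
    simp only [lt_min_iff]
    exact ⟨by nlinarith, hst⟩
end
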